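/- arXiv:1007.2301 — 3 statements merged into one kernel-verified Lean document; each statement's English description precedes it below -/
import Mathlib

section
/- The union of the images M1(P) ∪ M2(P) ∪ ... ∪ M6(P) equals P, i.e., every point of P has a preimage in P under at least one of the Mi. -/
open Matrix Real

noncomputable section

def M1 : Matrix (Fin 3) (Fin 3) ℝ := !![1/2,0,0; 1/2,1/2,0; 0,1/2,1]
def M2 : Matrix (Fin 3) (Fin 3) ℝ := !![1/2,1/2,0; 0,1/2,0; 1/2,0,1]
def M3 : Matrix (Fin 3) (Fin 3) ℝ := !![1,0,1/2; 0,1/2,0; 0,1/2,1/2]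
def M4 : Matrix (Fin 3) (Fin 3) ℝ := !![1,1/2,0; 0,1/2,1/2; 0,0,1/2]
def M5 : Matrix (Fin 3) (Fin 3) ℝ := !![1/2,0,1/2; 1/2,1,0; 0,0,1/2]
def M6 : Matrix (Fin 3) (Fin 3) ℝ := !![1/2,0,0; 0,1,1/2; 1/2,0,1/2]

def Ms : Fin 6 → Matrix (Fin 3) (Fin 3) ℝ := ![M1, M2, M3, M4, M5, M6]

/-- The simplex of angle triples of (possibly degenerate) triangles. -/
def P : Set (EuclideanSpace ℝ (Fin 3)) :=
  {v | 0 ≤ v 0 ∧ 0 ≤ v 1 ∧ 0 ≤ v 2 ∧ v 0 + v 1 + v 2 = π}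

/-- Apply a matrix to a point of Euclidean 3-space. -/
def app (M : Matrix (Fin 3) (Fin 3) ℝ) (v : EuclideanSpace ℝ (Fin 3)) :
    EuclideanSpace ℝ (Fin 3) := WithLp.toLp 2 (M.mulVec v)

/-- A point of Euclidean 3-space from coordinates. -/
def vec (a b c : ℝ) : EuclideanSpace ℝ (Fin 3) := WithLp.toLp 2 ![a, b, c]

/-!
Every `Mᵢ` is column-stochastic, so it maps the simplex `P` into itself. Conversely, each of
the six orderings `v i ≤ v j ≤ v k` of the coordinates of a point `v ∈ P` singles out one `Mᵢ`
whose inverse sends `v` back into `P`; since every point admits some ordering, the images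
cover `P`.
-/

lemma mem_P_iff {v : EuclideanSpace ℝ (Fin 3)} :
    v ∈ P ↔ (∀ i, 0 ≤ v i) ∧ ∑ i, v i = π := by
  simp only [P, Set.mem_ofPred_eq, Fin.forall_fin_succ, Fin.sum_univ_three, IsEmpty.forall_iff]
  tauto

lemma app_mem_P {M : Matrix (Fin 3) (Fin 3) ℝ} (hM : M ∈ colStochastic ℝ (Fin 3))
    {w : EuclideanSpace ℝ (Fin 3)} (hw : w ∈ P) : app M w ∈ P := by
  rw [mem_P_iff] at hw ⊢
  exact ⟨nonneg_mulVec_of_mem_colStochastic hM hw.1,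
    (sum_mulVec_of_mem_colStochastic hM).trans hw.2⟩

lemma Ms_mem_colStochastic (i : Fin 6) : Ms i ∈ colStochastic ℝ (Fin 3) := by
  rw [mem_colStochastic_iff_sum]
  constructor
  · intro j k
    fin_cases i <;> fin_cases j <;> fin_cases k <;> norm_num [Ms, M1, M2, M3, M4, M5, M6]
  · intro k
    fin_cases i <;> fin_cases k <;>
      simp only [Ms, M1, M2, M3, M4, M5, M6, Fin.sum_univ_three, of_apply, cons_val,
        Fin.reduceFinMk] <;> norm_num

lemma vec_mem_P {a b c : ℝ} (ha : 0 ≤ a) (hb : 0 ≤ b) (hc : 0 ≤ c) (h : a + b + c = π) :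
    vec a b c ∈ P :=
  ⟨ha, hb, hc, h⟩

lemma app_apply (M : Matrix (Fin 3) (Fin 3) ℝ) (v : EuclideanSpace ℝ (Fin 3)) (i : Fin 3) :
    app M v i = M i 0 * v 0 + M i 1 * v 1 + M i 2 * v 2 := by
  simp [app, mulVec, dotProduct, Fin.sum_univ_three]

section Orderings

variable {v : EuclideanSpace ℝ (Fin 3)}

lemma mem_image_M1 (hv : v ∈ P) (h01 : v 0 ≤ v 1) (h12 : v 1 ≤ v 2) : v ∈ app M1 '' P := by
  obtain ⟨h0, -, -, hs⟩ := hv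
  refine ⟨vec (2 * v 0) (2 * v 1 - 2 * v 0) (v 0 - v 1 + v 2),
    vec_mem_P (by linarith) (by linarith) (by linarith) (by linarith), ?_⟩
  ext j; fin_cases j <;> simp only [app_apply, M1, _root_.vec, of_apply, cons_val, Fin.reduceFinMk] <;> ring

lemma mem_image_M2 (hv : v ∈ P) (h10 : v 1 ≤ v 0) (h02 : v 0 ≤ v 2) : v ∈ app M2 '' P := by
  obtain ⟨-, h1, -, hs⟩ := hv
  refine ⟨vec (2 * v 0 - 2 * v 1) (2 * v 1) (v 1 - v 0 + v 2),
    vec_mem_P (by linarith) (by linarith) (by linarith) (by linarith), ?_⟩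
  ext j; fin_cases j <;> simp only [app_apply, M2, _root_.vec, of_apply, cons_val, Fin.reduceFinMk] <;> ring

lemma mem_image_M3 (hv : v ∈ P) (h12 : v 1 ≤ v 2) (h20 : v 2 ≤ v 0) : v ∈ app M3 '' P := by
  obtain ⟨-, h1, -, hs⟩ := hv
  refine ⟨vec (v 0 + v 1 - v 2) (2 * v 1) (2 * v 2 - 2 * v 1),
    vec_mem_P (by linarith) (by linarith) (by linarith) (by linarith), ?_⟩
  ext j; fin_cases j <;> simp only [app_apply, M3, _root_.vec, of_apply, cons_val, Fin.reduceFinMk] <;> ring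

lemma mem_image_M4 (hv : v ∈ P) (h21 : v 2 ≤ v 1) (h10 : v 1 ≤ v 0) : v ∈ app M4 '' P := by
  obtain ⟨-, -, h2, hs⟩ := hv
  refine ⟨vec (v 0 - v 1 + v 2) (2 * v 1 - 2 * v 2) (2 * v 2),
    vec_mem_P (by linarith) (by linarith) (by linarith) (by linarith), ?_⟩
  ext j; fin_cases j <;> simp only [app_apply, M4, _root_.vec, of_apply, cons_val, Fin.reduceFinMk] <;> ring

lemma mem_image_M5 (hv : v ∈ P) (h20 : v 2 ≤ v 0) (h01 : v 0 ≤ v 1) : v ∈ app M5 '' P := by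
  obtain ⟨-, -, h2, hs⟩ := hv
  refine ⟨vec (2 * v 0 - 2 * v 2) (v 1 - v 0 + v 2) (2 * v 2),
    vec_mem_P (by linarith) (by linarith) (by linarith) (by linarith), ?_⟩
  ext j; fin_cases j <;> simp only [app_apply, M5, _root_.vec, of_apply, cons_val, Fin.reduceFinMk] <;> ring

lemma mem_image_M6 (hv : v ∈ P) (h02 : v 0 ≤ v 2) (h21 : v 2 ≤ v 1) : v ∈ app M6 '' P := by
  obtain ⟨h0, -, -, hs⟩ := hv
  refine ⟨vec (2 * v 0) (v 0 + v 1 - v 2) (2 * v 2 - 2 * v 0),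
    vec_mem_P (by linarith) (by linarith) (by linarith) (by linarith), ?_⟩
  ext j; fin_cases j <;> simp only [app_apply, M6, _root_.vec, of_apply, cons_val, Fin.reduceFinMk] <;> ring

end Orderings

lemma P_subset_iUnion_image : P ⊆ ⋃ i : Fin 6, app (Ms i) '' P := by
  intro v hv
  rw [Set.mem_iUnion]
  rcases le_total (v 0) (v 1) with h01 | h10 <;> rcases le_total (v 1) (v 2) with h12 | h21 <;>
    rcases le_total (v 0) (v 2) with h02 | h20
  · exact ⟨0, mem_image_M1 hv h01 h12⟩
  · exact ⟨0, mem_image_M1 hv h01 h12⟩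
  · exact ⟨5, mem_image_M6 hv h02 h21⟩
  · exact ⟨4, mem_image_M5 hv h20 h01⟩
  · exact ⟨1, mem_image_M2 hv h10 h02⟩
  · exact ⟨2, mem_image_M3 hv h12 h20⟩
  · exact ⟨3, mem_image_M4 hv h21 h10⟩
  · exact ⟨3, mem_image_M4 hv h21 h10⟩

theorem stmt4 : (⋃ i : Fin 6, app (Ms i) '' P) = P :=
  subset_antisymm
    (Set.iUnion_subset fun i => Set.image_subset_iff.2 fun _ hw =>
      app_mem_P (Ms_mem_colStochastic i) hw)
    P_subset_iUnion_image
end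
end

section
/- For any vectors t, s in the hyperplane {(x,y,z) ∈ ℝ³ : x+y+z = c} (same c), the matrix M1 = [[1/2,0,0],[1/2,1/2,0],[0,1/2,1]] satisfies ‖M1(t−s)‖ ≤ (√3/2)·‖t−s‖, where ‖·‖ is the Euclidean norm on ℝ³. -/
open Matrix Real

noncomputable section

lemma norm_sq_app_M1 (d : EuclideanSpace ℝ (Fin 3)) :
    ‖app M1 d‖ ^ 2 = (d 0 / 2) ^ 2 + ((d 0 + d 1) / 2) ^ 2 + (d 1 / 2 + d 2) ^ 2 := by
  simp [EuclideanSpace.real_norm_sq_eq, app, M1, dotProduct, Fin.sum_univ_three]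
  ring

lemma norm_sq_app_M1_add_sq (d : EuclideanSpace ℝ (Fin 3)) (hd : d 0 + d 1 + d 2 = 0) :
    ‖app M1 d‖ ^ 2 + d 1 ^ 2 = 3 / 4 * ‖d‖ ^ 2 := by
  have hd2 : d 2 = -d 0 - d 1 := by linarith
  rw [norm_sq_app_M1, EuclideanSpace.real_norm_sq_eq, Fin.sum_univ_three, hd2]
  ring

lemma norm_app_M1_le (d : EuclideanSpace ℝ (Fin 3)) (hd : d 0 + d 1 + d 2 = 0) :
    ‖app M1 d‖ ≤ √3 / 2 * ‖d‖ := by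
  rw [← sq_le_sq₀ (norm_nonneg _) (by positivity), mul_pow, div_pow, sq_sqrt zero_le_three]
  linarith [norm_sq_app_M1_add_sq d hd, sq_nonneg (d 1)]

theorem stmt5 (c : ℝ) (t s : EuclideanSpace ℝ (Fin 3))
    (ht : t 0 + t 1 + t 2 = c) (hs : s 0 + s 1 + s 2 = c) :
    ‖app M1 (t - s)‖ ≤ (Real.sqrt 3 / 2) * ‖t - s‖ := by
  refine norm_app_M1_le (t - s) ?_
  simp only [PiLp.sub_apply]
  linarith
end
end

section
/- Each of the six matrices M1,...,M6 is a contraction with Lipschitz constant √3/2 on the hyperplane {x+y+z = π}: for all t, s in that hyperplane, ‖Mi t − Mi s‖ ≤ (√3/2)‖t−s‖. -/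
open Matrix Real

noncomputable section

/-! By linearity only the difference `v = t - s` matters, and its coordinates sum to zero.
Eliminating `v 2 = -(v 0 + v 1)`, the quantity `3/4 ‖v‖² - ‖Mᵢ v‖²` becomes, for each `i`,
a nonnegative quadratic form in `v 0, v 1`. -/

lemma app_sub (M : Matrix (Fin 3) (Fin 3) ℝ) (t s : EuclideanSpace ℝ (Fin 3)) :
    app M t - app M s = app M (t - s) := by
  simp [app, Matrix.mulVec_sub]

lemma norm_sq_eq_fin_three (v : EuclideanSpace ℝ (Fin 3)) :
    ‖v‖ ^ 2 = v 0 ^ 2 + v 1 ^ 2 + v 2 ^ 2 := by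
  simp [EuclideanSpace.norm_sq_eq, Fin.sum_univ_three]

lemma norm_le_of_sq_le_three_quarters {E F : Type*} [NormedAddCommGroup E]
    [NormedAddCommGroup F] {x : E} {y : F} (h : ‖x‖ ^ 2 ≤ 3 / 4 * ‖y‖ ^ 2) :
    ‖x‖ ≤ (Real.sqrt 3 / 2) * ‖y‖ := by
  have hsq : ((Real.sqrt 3 / 2) * ‖y‖) ^ 2 = 3 / 4 * ‖y‖ ^ 2 := by
    rw [mul_pow, div_pow, Real.sq_sqrt (by norm_num)]
    norm_num
  rw [← pow_le_pow_iff_left₀ (norm_nonneg _) (by positivity) two_ne_zero, hsq]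
  exact h

lemma norm_sq_app_Ms_le (i : Fin 6) (v : EuclideanSpace ℝ (Fin 3))
    (hv : v 0 + v 1 + v 2 = 0) :
    ‖app (Ms i) v‖ ^ 2 ≤ 3 / 4 * ‖v‖ ^ 2 := by
  have h2 : v 2 = -(v 0 + v 1) := by linarith
  rw [norm_sq_eq_fin_three, norm_sq_eq_fin_three]
  fin_cases i <;>
  · simp only [Ms, M1, M2, M3, M4, M5, M6, app, one_div, Fin.isValue, Fin.zero_eta, Fin.mk_one,
      Fin.reduceFinMk, cons_val, cons_val_zero, cons_val_one, cons_mulVec, empty_mulVec,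
      dotProduct, Fin.sum_univ_three, zero_mul, one_mul, add_zero, zero_add, h2]
    nlinarith [sq_nonneg (v 0), sq_nonneg (v 1), sq_nonneg (v 0 + v 1)]

theorem stmt7 (i : Fin 6) (t s : EuclideanSpace ℝ (Fin 3))
    (ht : t 0 + t 1 + t 2 = π) (hs : s 0 + s 1 + s 2 = π) :
    ‖app (Ms i) t - app (Ms i) s‖ ≤ (Real.sqrt 3 / 2) * ‖t - s‖ := by
  have hsum : (t - s) 0 + (t - s) 1 + (t - s) 2 = 0 := by
    simp only [PiLp.sub_apply]
    linarith
  rw [app_sub]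
  exact norm_le_of_sq_le_three_quarters (norm_sq_app_Ms_le i (t - s) hsum)
end
end
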